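/- arXiv:1410.2141 — 2 statements merged into one kernel-verified Lean document; each statement's English description precedes it below -/
import Mathlib

section
/- Let α_k and α_k^* (k ≥ 1) be the decay and fusion operators on Y = Z_2[y_0, y_1, ...]. For any monomial y^e with exponent vector e, (α_k α_k^* + α_k^* α_k)(y^e) equals y^e if e_{k-1} ≥ 2 or e_k is odd, and equals 0 if e_{k-1} ≤ 1 and e_k is even. -/
/-!
A derivation of `Y` that kills every variable except `y_k` is `α (y_k) • ∂/∂y_k`, so
`α_k (y^e) = e_k · y^{e - δ_k + 2δ_{k-1}}`. The decay and fusion exponent shifts undo each other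
whenever the target monomial exists, hence on `y^e` the term `α_k^* α_k` contributes `e_k · y^e`
and, when `e_{k-1} ≥ 2`, the term `α_k α_k^*` contributes `(e_k + 1) · y^e`. Mod 2 these add up
to `y^e` if `e_{k-1} ≥ 2`, and to `e_k · y^e` otherwise.
-/

open MvPolynomial

/-- `Y = Z_2[y_0, y_1, y_2, ...]`. -/
abbrev Ypoly := MvPolynomial ℕ (ZMod 2)

namespace MvPolynomial

variable {R σ : Type*} [CommSemiring R]

theorem derivation_eq_smul_pderiv (D : Derivation R (MvPolynomial σ R) (MvPolynomial σ R))
    (k : σ) (hD : ∀ i, i ≠ k → D (X i) = 0) : D = D (X k) • pderiv k := by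
  refine derivation_ext fun i => ?_
  rcases eq_or_ne i k with rfl | hi
  · simp
  · simp [hD i hi, pderiv_X_of_ne hi]

theorem derivation_monomial_of_apply_X (D : Derivation R (MvPolynomial σ R) (MvPolynomial σ R))
    {j k : σ} (hDk : D (X k) = X j ^ 2) (hD : ∀ i, i ≠ k → D (X i) = 0) (e : σ →₀ ℕ) :
    D (monomial e 1) = monomial (e - Finsupp.single k 1 + Finsupp.single j 2) (e k : R) := by
  rw [derivation_eq_smul_pderiv D k hD, Derivation.smul_apply, hDk, pderiv_monomial, smul_eq_mul,
    X_pow_eq_monomial, monomial_mul, one_mul, one_mul, add_comm (Finsupp.single j 2)]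

end MvPolynomial

noncomputable section Exponents

variable {σ : Type*} {j k : σ}

/-- The exponent shift of the decay `y_k ↦ y_j ^ 2`. -/
def decayExp (j k : σ) (e : σ →₀ ℕ) : σ →₀ ℕ :=
  e - Finsupp.single k 1 + Finsupp.single j 2

/-- The exponent shift of the fusion `y_j ^ 2 ↦ y_k`. -/
def fuseExp [DecidableEq σ] (j k : σ) (e : σ →₀ ℕ) : σ →₀ ℕ :=
  (e.update j (e j - 2)).update k (e k + 1)

theorem decayExp_apply_left (hjk : j ≠ k) (e : σ →₀ ℕ) : decayExp j k e j = e j + 2 := by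
  simp [decayExp, hjk]

theorem fuseExp_apply_right [DecidableEq σ] (e : σ →₀ ℕ) : fuseExp j k e k = e k + 1 := by
  simp [fuseExp]

theorem decayExp_fuseExp [DecidableEq σ] (hjk : j ≠ k) {e : σ →₀ ℕ} (he : 2 ≤ e j) :
    decayExp j k (fuseExp j k e) = e := by
  ext i
  rcases eq_or_ne i k with rfl | hik
  · simp [decayExp, fuseExp, hjk]
  rcases eq_or_ne i j with rfl | hij
  · simp [decayExp, fuseExp, hik]
    omega
  · simp [decayExp, fuseExp, hik, hij]

theorem fuseExp_decayExp [DecidableEq σ] (hjk : j ≠ k) {e : σ →₀ ℕ} (he : 1 ≤ e k) :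
    fuseExp j k (decayExp j k e) = e := by
  ext i
  rcases eq_or_ne i k with rfl | hik
  · simp [decayExp, fuseExp, hjk]
    omega
  rcases eq_or_ne i j with rfl | hij
  · simp [decayExp, fuseExp, hik]
  · simp [decayExp, fuseExp, hik, hij]

end Exponents

theorem ZMod.natCast_smul_eq_ite {M : Type*} [AddCommMonoid M] [Module (ZMod 2) M] (n : ℕ)
    (m : M) : (n : ZMod 2) • m = if Odd n then m else 0 := by
  rw [CharTwo.natCast_eq_ite]
  by_cases h : Odd n
  · simp [h, Nat.not_even_iff_odd.mpr h]
  · simp [h, Nat.not_odd_iff_even.mp h]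

/-- For `k ≥ 1`, with `α_k` the decay operator and `α_k^*` the fusion operator on `Y`,
on any monomial `y^e` one has `(α_k α_k^* + α_k^* α_k)(y^e) = y^e` if `e_{k-1} ≥ 2` or
`e_k` is odd, and `= 0` if `e_{k-1} ≤ 1` and `e_k` is even. -/
theorem stmt4 (k : ℕ) (hk : 1 ≤ k)
    (α : Derivation (ZMod 2) Ypoly Ypoly)
    (hαk : α (X k) = (X (k - 1)) ^ 2)
    (hα : ∀ i : ℕ, i ≠ k → α (X i) = 0)
    (F : Ypoly →ₗ[ZMod 2] Ypoly)
    (hF : ∀ e : ℕ →₀ ℕ, F (monomial e 1) =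
      if 2 ≤ e (k - 1) then
        monomial ((e.update (k - 1) (e (k - 1) - 2)).update k (e k + 1)) 1
      else 0) :
    ∀ e : ℕ →₀ ℕ,
      α (F (monomial e 1)) + F (α (monomial e 1)) =
        if 2 ≤ e (k - 1) ∨ Odd (e k) then monomial e 1 else 0 := by
  intro e
  have hjk : k - 1 ≠ k := by omega
  have decay (e : ℕ →₀ ℕ) :
      α (monomial e 1) = (e k : ZMod 2) • monomial (decayExp (k - 1) k e) 1 := by
    rw [derivation_monomial_of_apply_X α hαk hα, smul_monomial, smul_eq_mul, mul_one, decayExp]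
  have fuse (e : ℕ →₀ ℕ) : F (monomial e 1) =
      if 2 ≤ e (k - 1) then monomial (fuseExp (k - 1) k e) 1 else 0 := hF e
  have fuse_decay : F (α (monomial e 1)) = (e k : ZMod 2) • monomial e 1 := by
    rcases Nat.eq_zero_or_pos (e k) with he | he
    · simp [decay, he]
    rw [decay, map_smul, fuse, if_pos (by rw [decayExp_apply_left hjk]; omega),
      fuseExp_decayExp hjk he]
  by_cases hj : 2 ≤ e (k - 1)
  · have decay_fuse : α (F (monomial e 1)) = ((e k + 1 : ℕ) : ZMod 2) • monomial e 1 := by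
      rw [fuse, if_pos hj, decay, fuseExp_apply_right, decayExp_fuseExp hjk hj]
    rw [decay_fuse, fuse_decay, ← add_smul, if_pos (Or.inl hj), Nat.cast_succ, add_right_comm,
      CharTwo.add_self_eq_zero, zero_add, one_smul]
  · rw [fuse, if_neg hj, map_zero, zero_add, fuse_decay, ZMod.natCast_smul_eq_ite]
    simp [hj]
end

section
/- The map Φ : A_+ ⊗ X → X with Φ(a_{n-1/2} p) = x_n p induces on homology an injective map H(A_+ ⊗ X) → H(X) whose image is exactly the ideal x̄_1 · H(X). Hence H(A_+ ⊗ X) ≅ x̄_1 H(X) as H(X)-modules. -/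
open MvPolynomial

/-- Nonzero integers, the index set of the variables `x_m` of `X`. -/
abbrev NZ := {n : ℤ // n ≠ 0}

/-- `X = Z_2[x_m : m ∈ ℤ, m ≠ 0]`. -/
abbrev Xpoly := MvPolynomial NZ (ZMod 2)

/-- The variable `x_m` (and `0` for the illegal index `m = 0`). -/
noncomputable def xv (m : ℤ) : Xpoly :=
  if h : m ≠ 0 then X ⟨m, h⟩ else 0

/-- `A_+ ⊗ X`, the free `X`-module with basis `a_{1/2}, a_{3/2}, ...`; index `m : ℕ`
stands for `a_{m + 1/2}`. -/
abbrev AX := ℕ →₀ Xpoly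

/-!
Write `∂₁ = ∂/∂x₁`. Since `D` sends every variable to a square, `D² = 0` and `D ∂₁ = ∂₁ D`
(both `D²` and `[∂₁, D]` are derivations in characteristic two, vanishing on the variables).
Hence if `D r = 0` and `x₁ r = D q`, applying `∂₁` gives `r = x₁ ∂₁r + D ∂₁q` with `D ∂₁r = 0`:
the annihilator of `x̄₁` in `H(X)` is `x̄₁ H(X)`.

Pairing the terms `x_i x_j`, `i + j = n`, in characteristic two shows
`∑_{i+j=n} x_i x_j = D x_n`, which makes `Φ` a chain map and `dA² = 0`. If `f` is a cycle with
top coefficient `p = f_{N+1}`, then `D p = 0` and `x₁ p = D f_N`, so `p = x₁ s + D t` with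
`D s = 0`, and `f + dA (a_{N+3/2} s + a_{N+1/2} t)` is a homologous cycle of lower degree.
So every cycle is homologous to `a_{1/2} r` with `D r = 0`, whose image is `x₁ r`; and if `x₁ r`
is a boundary then `r = x₁ s + D t` and `a_{1/2} r = dA (a_{3/2} s + a_{1/2} t)`.
-/

open Finset

namespace Derivation

variable {A : Type*} [CommRing A] [Algebra (ZMod 2) A]

theorem map_eq_zero_of_isSquare {M : Type*} [AddCommGroup M] [Module A M] [Module (ZMod 2) M]
    (D : Derivation (ZMod 2) A M) {a : A} (ha : IsSquare a) : D a = 0 := by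
  obtain ⟨b, rfl⟩ := ha
  rw [D.leibniz, ZModModule.add_self]

/-- In characteristic two the cross terms `D a * D b` of `D (D (a * b))` cancel. -/
def compSelfOfZModTwo (D : Derivation (ZMod 2) A A) : Derivation (ZMod 2) A A :=
  mk' (D.toLinearMap ∘ₗ D.toLinearMap) fun a b => by
    show D (D (a * b)) = a • D (D b) + b • D (D a)
    simp only [leibniz, map_add, smul_eq_mul]
    linear_combination ZModModule.add_self (D a * D b)

end Derivation

namespace MvPolynomial

variable {σ : Type*}

theorem derivation_comp_self_eq_zero
    (D : Derivation (ZMod 2) (MvPolynomial σ (ZMod 2)) (MvPolynomial σ (ZMod 2)))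
    (hD : ∀ i, IsSquare (D (X i))) (p : MvPolynomial σ (ZMod 2)) : D (D p) = 0 := by
  have h : D.compSelfOfZModTwo = 0 :=
    derivation_ext fun i => D.map_eq_zero_of_isSquare (hD i)
  exact DFunLike.congr_fun h p

theorem pderiv_comm_derivation {R : Type*} [CommRing R]
    (D : Derivation R (MvPolynomial σ R) (MvPolynomial σ R)) (i : σ)
    (hD : ∀ j, pderiv i (D (X j)) = 0) (p : MvPolynomial σ R) :
    pderiv i (D p) = D (pderiv i p) := by
  have h : ⁅pderiv i, D⁆ = 0 := derivation_ext fun j => by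
    classical
    rw [Derivation.commutator_apply, hD, pderiv_X, Pi.single_apply]
    split_ifs <;> simp
  rw [← sub_eq_zero, ← Derivation.commutator_apply, h, Derivation.zero_apply]

theorem exists_eq_X_mul_add_of_X_mul_eq {R : Type*} [CommRing R]
    (D : Derivation R (MvPolynomial σ R) (MvPolynomial σ R)) (i : σ)
    (hcomm : ∀ p, pderiv i (D p) = D (pderiv i p)) {r q : MvPolynomial σ R} (hr : D r = 0)
    (hq : X i * r = D q) : ∃ s t, D s = 0 ∧ r = X i * s + D t := by
  refine ⟨-pderiv i r, pderiv i q, by rw [map_neg, ← hcomm, hr, map_zero, neg_zero], ?_⟩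
  have h := congr(pderiv i $hq)
  rw [Derivation.leibniz, pderiv_X_self, hcomm, smul_eq_mul, smul_eq_mul] at h
  linear_combination h

end MvPolynomial

section CharTwo

variable {A : Type*} [CommRing A] [CharP A 2]

theorem sum_range_add_two_mul_reflect (f : ℤ → A) (M : ℕ) :
    ∑ j ∈ range (M + 2), f (j + 1) * f (M + 2 - j) =
      ∑ j ∈ range M, f (j + 1 + 1) * f (M - j + 1) := by
  rw [sum_range_succ', sum_range_succ]
  push_cast
  have hends : f (M + 1 + 1) * f (M + 2 - (M + 1)) + f 1 * f (M + 2 - 0) = 0 := by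
    rw [show (M : ℤ) + 2 - (M + 1) = 1 by ring, show (M : ℤ) + 2 - 0 = M + 1 + 1 by ring,
      mul_comm, CharTwo.add_self_eq_zero]
  rw [add_assoc, hends, add_zero]
  exact sum_congr rfl fun j _ => by ring_nf

theorem sum_range_two_mul_reflect (f : ℤ → A) (n : ℕ) :
    ∑ j ∈ range (2 * n), f (j + 1) * f (2 * n - j) = 0 := by
  induction n generalizing f with
  | zero => simp
  | succ n ih =>
    have h := sum_range_add_two_mul_reflect f (2 * n)
    push_cast at h
    rw [show 2 * (n + 1) = 2 * n + 2 by ring]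
    push_cast
    convert h.trans (ih (fun z => f (z + 1))) using 3
    ring_nf

theorem sum_range_two_mul_add_one_reflect (f : ℤ → A) (n : ℕ) :
    ∑ j ∈ range (2 * n + 1), f (j + 1) * f (2 * n + 1 - j) = f (n + 1) ^ 2 := by
  induction n generalizing f with
  | zero => simp [sq]
  | succ n ih =>
    have h := sum_range_add_two_mul_reflect f (2 * n + 1)
    rw [show 2 * (n + 1) + 1 = 2 * n + 1 + 2 by ring]
    push_cast at h ⊢
    convert h.trans (ih (fun z => f (z + 1))) using 3
    ring_nf

end CharTwo

theorem xv_val (n : NZ) : xv n = X n := by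
  rw [xv, dif_pos n.2]

theorem xv_one : xv 1 = X ⟨1, one_ne_zero⟩ :=
  xv_val ⟨1, one_ne_zero⟩

section Differential

variable (D : Derivation (ZMod 2) Xpoly Xpoly)
  (heven : ∀ k : ℤ, k ≠ 0 → D (xv (2 * k)) = (xv k) ^ 2)
  (hodd : ∀ k : ℤ, D (xv (2 * k + 1)) = 0)

include heven hodd

theorem isSquare_D_X (n : NZ) : IsSquare (D (X n)) := by
  rw [← xv_val]
  obtain ⟨k, hk⟩ | ⟨k, hk⟩ := Int.even_or_odd n.1
  · have hk0 : k ≠ 0 := by rintro rfl; exact n.2 (by simpa using hk)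
    rw [hk, ← two_mul, heven k hk0]
    exact ⟨xv k, sq _⟩
  · rw [hk, hodd k]
    exact .zero

theorem sum_range_xv_mul_xv (M : ℕ) :
    ∑ j ∈ range M, xv (j + 1) * xv (M - j) = D (xv (M + 1)) := by
  obtain ⟨n, rfl | rfl⟩ := Nat.even_or_odd' M
  · push_cast
    rw [sum_range_two_mul_reflect, hodd]
  · push_cast
    rw [sum_range_two_mul_add_one_reflect, show 2 * (n : ℤ) + 1 + 1 = 2 * (n + 1) by ring,
      heven _ (by omega)]

theorem exists_eq_xv_one_mul_add {r q : Xpoly} (hr : D r = 0) (hq : xv 1 * r = D q) :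
    ∃ s t, D s = 0 ∧ r = xv 1 * s + D t := by
  rw [xv_one] at hq ⊢
  exact exists_eq_X_mul_add_of_X_mul_eq D _ (pderiv_comm_derivation D _ fun j =>
    (pderiv _).map_eq_zero_of_isSquare (isSquare_D_X D heven hodd j)) hr hq

end Differential

namespace AX

variable (D : Derivation (ZMod 2) Xpoly Xpoly) (dA : AX →ₗ[ZMod 2] AX)
  (hdA : ∀ (m : ℕ) (p : Xpoly), dA (Finsupp.single m p) =
      (∑ j ∈ range m, Finsupp.single j (xv (m - j : ℤ) * p)) + Finsupp.single m (D p))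
  (heven : ∀ k : ℤ, k ≠ 0 → D (xv (2 * k)) = (xv k) ^ 2)
  (hodd : ∀ k : ℤ, D (xv (2 * k + 1)) = 0)

include hdA

theorem dA_apply (f : AX) (i : ℕ) :
    dA f i = D (f i) + f.sum fun m p => if i < m then xv (m - i) * p else 0 := by
  induction f using Finsupp.induction_linear with
  | zero => simp
  | add f g hf hg =>
    rw [map_add, Finsupp.add_apply, hf, hg, Finsupp.sum_add_index' (by simp)
      (fun m p q => by split_ifs <;> ring), Finsupp.add_apply, map_add]
    abel
  | single m p =>
    rw [hdA, Finsupp.sum_single_index (by simp), Finsupp.add_apply, Finsupp.finsetSum_apply]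
    simp only [Finsupp.single_apply]
    rw [sum_ite_eq']
    split_ifs <;> simp_all [add_comm]

theorem dA_apply_of_le {f : AX} {n m : ℕ} (hf : ∀ k, n < k → f k = 0) (hm : n ≤ m) :
    dA f m = D (f m) := by
  rw [dA_apply D dA hdA, Finsupp.sum, sum_eq_zero, add_zero]
  intro k hk
  have : k ≤ n := not_lt.mp fun h => Finsupp.mem_support_iff.mp hk (hf k h)
  exact if_neg (by omega)

theorem dA_apply_of_succ {f : AX} {n : ℕ} (hf : ∀ k, n + 1 < k → f k = 0) :
    dA f n = D (f n) + xv 1 * f (n + 1) := by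
  rw [dA_apply D dA hdA, Finsupp.sum_eq_single (n + 1)]
  · push_cast; rw [if_pos n.lt_succ_self, add_sub_cancel_left]
  · intro k hk hkn
    have : k ≤ n + 1 := not_lt.mp fun h => hk (hf k h)
    exact if_neg (by omega)
  · simp

theorem dA_single_zero (p : Xpoly) : dA (Finsupp.single 0 p) = Finsupp.single 0 (D p) := by
  simp [hdA]

include heven hodd in
theorem dA_dA_single (m : ℕ) (p : Xpoly) : dA (dA (Finsupp.single m p)) = 0 := by
  have hinner : ∀ i ∈ range m, ∑ j ∈ Ico (i + 1) m,
      Finsupp.single i (xv (j - i) * (xv (m - j) * p)) =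
        Finsupp.single i (D (xv (m - i)) * p) := by
    intro i hi
    obtain ⟨M, rfl⟩ : ∃ M, m = i + 1 + M := ⟨m - (i + 1), by simp at hi; omega⟩
    rw [sum_Ico_eq_sum_range, ← Finsupp.single_finsetSum, add_tsub_cancel_left]
    congr 1
    rw [show ((i + 1 + M : ℕ) : ℤ) - i = M + 1 by push_cast; ring,
      ← sum_range_xv_mul_xv D heven hodd M, sum_mul]
    refine sum_congr rfl fun t _ => ?_
    push_cast
    ring_nf
  rw [hdA, map_add, map_sum, hdA]
  simp only [hdA, Derivation.leibniz, smul_eq_mul, Finsupp.single_add, sum_add_distrib,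
    derivation_comp_self_eq_zero D (isSquare_D_X D heven hodd), Finsupp.single_zero, add_zero,
    range_eq_Ico]
  rw [← sum_Ico_Ico_comm', ← range_eq_Ico, sum_congr rfl hinner]
  simp only [mul_comm p, range_eq_Ico]
  rw [add_left_comm, ZModModule.add_self, add_zero, ZModModule.add_self]

include heven hodd in
theorem dA_dA (f : AX) : dA (dA f) = 0 := by
  induction f using Finsupp.induction_linear with
  | zero => simp
  | add f g hf hg => rw [map_add, map_add, hf, hg, add_zero]
  | single m p => exact dA_dA_single D dA hdA heven hodd m p

include heven hodd in
theorem Φ_dA (Φ : AX →ₗ[ZMod 2] Xpoly)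
    (hΦ : ∀ (m : ℕ) (p : Xpoly), Φ (Finsupp.single m p) = xv (m + 1 : ℤ) * p) (f : AX) :
    Φ (dA f) = D (Φ f) := by
  induction f using Finsupp.induction_linear with
  | zero => simp
  | add f g hf hg => simp only [map_add, hf, hg]
  | single m p =>
    rw [hdA, map_add, map_sum, hΦ, hΦ, Derivation.leibniz, ← sum_range_xv_mul_xv D heven hodd m,
      smul_eq_mul, smul_eq_mul, mul_comm p, sum_mul]
    simp only [hΦ, mul_assoc]
    exact add_comm _ _

include heven hodd in
theorem exists_add_dA_apply_eq_zero_of_lt {N : ℕ} {f : AX} (hf : ∀ k, N + 1 < k → f k = 0)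
    (hc : dA f = 0) : ∃ g : AX, ∀ k, N < k → (f + dA g) k = 0 := by
  have hDp : D (f (N + 1)) = 0 := by
    rw [← dA_apply_of_le D dA hdA hf le_rfl, hc, Finsupp.zero_apply]
  have hx1p : xv 1 * f (N + 1) = D (f N) := by
    have h := dA_apply_of_succ D dA hdA hf
    rw [hc, Finsupp.zero_apply] at h
    linear_combination -h - ZModModule.add_self (D (f N))
  obtain ⟨s, t, hs, hst⟩ := exists_eq_xv_one_mul_add D heven hodd hDp hx1p
  set g : AX := Finsupp.single (N + 2) s + Finsupp.single (N + 1) t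
  have hg : ∀ k, N + 2 < k → g k = 0 := fun k hk => by
    simp [g, show N + 2 ≠ k by omega, show N + 1 ≠ k by omega]
  refine ⟨g, fun k hk => ?_⟩
  obtain rfl | hk := (Nat.succ_le_of_lt hk).eq_or_lt
  · have hgN : g (N + 1) = t := by simp [g]
    have hgN' : g (N + 1 + 1) = s := by simp [g]
    rw [Finsupp.add_apply, dA_apply_of_succ D dA hdA hg, hst, hgN, hgN', add_comm (D t),
      ZModModule.add_self]
  · rw [Finsupp.add_apply, hf k hk, dA_apply_of_le D dA hdA hg hk]
    simp only [g, Finsupp.add_apply, Finsupp.single_apply, if_neg (show N + 1 ≠ k by omega),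
      add_zero, zero_add]
    split_ifs
    exacts [hs, map_zero D]

include heven hodd in
theorem exists_eq_single_zero_add_dA {f : AX} (hc : dA f = 0) :
    ∃ r g, D r = 0 ∧ f = Finsupp.single 0 r + dA g := by
  obtain ⟨N, hN⟩ : ∃ N, ∀ k, N < k → f k = 0 := ⟨f.support.sup id, fun k hk =>
    Finsupp.notMem_support_iff.mp fun h => (le_sup (f := id) h).not_gt hk⟩
  induction N generalizing f with
  | zero =>
    refine ⟨f 0, 0, ?_, ?_⟩
    · rw [← dA_apply_of_le D dA hdA hN le_rfl, hc, Finsupp.zero_apply]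
    · ext k
      obtain rfl | hk := k.eq_zero_or_pos
      · simp
      · simp [hN k hk, hk.ne']
  | succ N ih =>
    obtain ⟨g₀, hg₀⟩ := exists_add_dA_apply_eq_zero_of_lt D dA hdA heven hodd hN hc
    obtain ⟨r, g, hr, hfg⟩ := ih (by rw [map_add, hc, dA_dA D dA hdA heven hodd, zero_add]) hg₀
    refine ⟨r, g + g₀, hr, ?_⟩
    rw [map_add, ← add_assoc, ← hfg, add_assoc, ZModModule.add_self, add_zero]

include heven hodd in
theorem exists_eq_dA_of_Φ_eq_D (Φ : AX →ₗ[ZMod 2] Xpoly)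
    (hΦ : ∀ (m : ℕ) (p : Xpoly), Φ (Finsupp.single m p) = xv (m + 1 : ℤ) * p) {f : AX}
    (hc : dA f = 0) {q : Xpoly} (hq : Φ f = D q) : ∃ g, f = dA g := by
  obtain ⟨r, g, hr, rfl⟩ := exists_eq_single_zero_add_dA D dA hdA heven hodd hc
  rw [map_add, Φ_dA D dA hdA heven hodd Φ hΦ, hΦ, Nat.cast_zero, zero_add] at hq
  obtain ⟨s, t, hs, rfl⟩ := exists_eq_xv_one_mul_add D heven hodd hr (q := q + Φ g)
    (by rw [map_add]; linear_combination hq - ZModModule.add_self (D (Φ g)))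
  refine ⟨Finsupp.single 1 s + Finsupp.single 0 t + g, ?_⟩
  rw [map_add, map_add, hdA, hdA, hs]
  simp [Finsupp.single_add]

end AX

/-- The chain map `Φ : A_+ ⊗ X → X`, `Φ(a_{n-1/2} p) = x_n p`, induces on homology an
injective map `H(A_+ ⊗ X) → H(X)` whose image is exactly `x̄_1 · H(X)`:
(i) a cycle whose image under `Φ` is a boundary is itself a boundary;
(ii) the image under `Φ` of any cycle is, modulo boundaries, `x_1` times a cycle;
(iii) `x_1` times any cycle is, modulo boundaries, the image under `Φ` of some cycle. -/
theorem stmt15 (D : Derivation (ZMod 2) Xpoly Xpoly)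
    (heven : ∀ k : ℤ, k ≠ 0 → D (xv (2 * k)) = (xv k) ^ 2)
    (hodd : ∀ k : ℤ, D (xv (2 * k + 1)) = 0)
    (dA : AX →ₗ[ZMod 2] AX)
    (hdA : ∀ (m : ℕ) (p : Xpoly), dA (Finsupp.single m p) =
      (∑ j ∈ Finset.range m, Finsupp.single j (xv (m - j : ℤ) * p)) +
        Finsupp.single m (D p))
    (Φ : AX →ₗ[ZMod 2] Xpoly)
    (hΦ : ∀ (m : ℕ) (p : Xpoly), Φ (Finsupp.single m p) = xv (m + 1 : ℤ) * p) :
    (∀ f : AX, dA f = 0 → (∃ q : Xpoly, Φ f = D q) → ∃ g : AX, f = dA g) ∧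
    (∀ f : AX, dA f = 0 → ∃ r q : Xpoly, D r = 0 ∧ Φ f = xv 1 * r + D q) ∧
    (∀ r : Xpoly, D r = 0 → ∃ f : AX, dA f = 0 ∧ ∃ q : Xpoly, xv 1 * r = Φ f + D q) := by
  have hΦ₀ (r : Xpoly) : Φ (Finsupp.single 0 r) = xv 1 * r := by simpa using hΦ 0 r
  refine ⟨fun f hc ⟨q, hq⟩ => AX.exists_eq_dA_of_Φ_eq_D D dA hdA heven hodd Φ hΦ hc hq,
    fun f hc => ?_, fun r hr => ?_⟩
  · obtain ⟨r, g, hr, rfl⟩ := AX.exists_eq_single_zero_add_dA D dA hdA heven hodd hc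
    exact ⟨r, Φ g, hr, by rw [map_add, hΦ₀, AX.Φ_dA D dA hdA heven hodd Φ hΦ]⟩
  · refine ⟨Finsupp.single 0 r, ?_, 0, by rw [hΦ₀, map_zero, add_zero]⟩
    rw [AX.dA_single_zero D dA hdA, hr, Finsupp.single_zero]
end
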